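/- Let M = [[L₁, G],[Gᵀ, L₂]] be complex symmetric with symmetric blocks L₁, L₂, and let ξ satisfy G + L₁ conj(ξ) − ξ L₂ − ξ Gᵀ conj(ξ) = 0. Then with U as the standard unitary block matrix built from ξ, the (1,2) block of Uᴴ M conj(U) vanishes, i.e. Uᴴ M conj(U) is block diagonal. -/

import Mathlib

open Matrix ComplexOrder

/-- The positive semidefinite square root of a positive semidefinite matrix (the definition of
`Matrix.PosSemidef.sqrt` in the older Mathlib, which has since been removed). -/
noncomputable def posSemidefSqrt {n : Type*} [Fintype n] [DecidableEq n] {A : Matrix n n ℂ}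
    (hA : A.PosSemidef) : Matrix n n ℂ :=
  hA.1.eigenvectorUnitary.1 * diagonal ((↑) ∘ (·.sqrt) ∘ hA.1.eigenvalues) *
    (star hA.1.eigenvectorUnitary : Matrix n n ℂ)

/-- The positive semidefinite square root of `1 + ξ * ξᴴ`. -/
noncomputable def sqrtOnePlusSelfMulConjTranspose {n₁ n₂ : ℕ}
    (ξ : Matrix (Fin n₁) (Fin n₂) ℂ) : Matrix (Fin n₁) (Fin n₁) ℂ :=
  posSemidefSqrt (Matrix.PosSemidef.add Matrix.PosSemidef.one
    (Matrix.posSemidef_self_mul_conjTranspose ξ))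

/-- The positive semidefinite square root of `1 + ξᴴ * ξ`. -/
noncomputable def sqrtOnePlusConjTransposeMulSelf {n₁ n₂ : ℕ}
    (ξ : Matrix (Fin n₁) (Fin n₂) ℂ) : Matrix (Fin n₂) (Fin n₂) ℂ :=
  posSemidefSqrt (Matrix.PosSemidef.add Matrix.PosSemidef.one
    (Matrix.posSemidef_conjTranspose_mul_self ξ))

/-- The standard unitary block matrix built from `ξ`. -/
noncomputable def blockUnitary {n₁ n₂ : ℕ} (ξ : Matrix (Fin n₁) (Fin n₂) ℂ) :
    Matrix (Fin n₁ ⊕ Fin n₂) (Fin n₁ ⊕ Fin n₂) ℂ :=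
  Matrix.fromBlocks
    (sqrtOnePlusSelfMulConjTranspose ξ)⁻¹ (ξ * (sqrtOnePlusConjTransposeMulSelf ξ)⁻¹)
    (-(ξᴴ * (sqrtOnePlusSelfMulConjTranspose ξ)⁻¹)) (sqrtOnePlusConjTransposeMulSelf ξ)⁻¹

section BlockConjugation

variable {R m n : Type*} [CommRing R] [StarRing R] [Fintype m] [Fintype n]

def riccatiResidual (L₁ : Matrix m m R) (L₂ : Matrix n n R) (G ξ : Matrix m n R) :
    Matrix m n R :=
  G + L₁ * ξ.map (starRingEnd R) - ξ * L₂ - ξ * Gᵀ * ξ.map (starRingEnd R)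

theorem toBlocks₁₂_conjTranspose_mul_fromBlocks_mul_map_star (A : Matrix m m R)
    (B : Matrix n n R) (L₁ : Matrix m m R) (L₂ : Matrix n n R) (G ξ : Matrix m n R) :
    ((fromBlocks A (ξ * B) (-(ξᴴ * A)) B)ᴴ * fromBlocks L₁ G Gᵀ L₂
        * (fromBlocks A (ξ * B) (-(ξᴴ * A)) B).map (starRingEnd R)).toBlocks₁₂
      = Aᴴ * riccatiResidual L₁ L₂ G ξ * B.map (starRingEnd R) := by
  simp only [riccatiResidual, fromBlocks_conjTranspose, fromBlocks_map, fromBlocks_multiply,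
    toBlocks_fromBlocks₁₂, conjTranspose_neg, conjTranspose_mul, conjTranspose_conjTranspose,
    Matrix.map_mul, Matrix.neg_mul, Matrix.add_mul, Matrix.mul_add, Matrix.sub_mul,
    Matrix.mul_sub, Matrix.mul_assoc]
  abel

end BlockConjugation

theorem block_decoupling_offdiagonal_vanishes_general (n₁ n₂ : ℕ)
    (L₁ : Matrix (Fin n₁) (Fin n₁) ℂ) (L₂ : Matrix (Fin n₂) (Fin n₂) ℂ)
    (G : Matrix (Fin n₁) (Fin n₂) ℂ)
    (ξ : Matrix (Fin n₁) (Fin n₂) ℂ)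
    (hξ : G + L₁ * ξ.map (starRingEnd ℂ) - ξ * L₂ - ξ * Gᵀ * ξ.map (starRingEnd ℂ) = 0) :
    ((blockUnitary ξ)ᴴ * Matrix.fromBlocks L₁ G Gᵀ L₂
        * (blockUnitary ξ).map (starRingEnd ℂ)).toBlocks₁₂ = 0 := by
  rw [blockUnitary, toBlocks₁₂_conjTranspose_mul_fromBlocks_mul_map_star, riccatiResidual, hξ,
    Matrix.mul_zero, Matrix.zero_mul]

/-- If `ξ` solves `G + L₁ conj(ξ) − ξ L₂ − ξ Gᵀ conj(ξ) = 0`, then the `(1,2)` block of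
`Uᴴ M conj(U)` vanishes, where `M = [[L₁, G],[Gᵀ, L₂]]` and `U` is the standard unitary
block matrix built from `ξ`; i.e. `Uᴴ M conj(U)` is block diagonal. -/
theorem block_decoupling_offdiagonal_vanishes (n₁ n₂ : ℕ)
    (L₁ : Matrix (Fin n₁) (Fin n₁) ℂ) (L₂ : Matrix (Fin n₂) (Fin n₂) ℂ)
    (G : Matrix (Fin n₁) (Fin n₂) ℂ) (hL₁ : L₁ᵀ = L₁) (hL₂ : L₂ᵀ = L₂)
    (ξ : Matrix (Fin n₁) (Fin n₂) ℂ)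
    (hξ : G + L₁ * ξ.map (starRingEnd ℂ) - ξ * L₂ - ξ * Gᵀ * ξ.map (starRingEnd ℂ) = 0) :
    ((blockUnitary ξ)ᴴ * Matrix.fromBlocks L₁ G Gᵀ L₂
        * (blockUnitary ξ).map (starRingEnd ℂ)).toBlocks₁₂ = 0 :=
  block_decoupling_offdiagonal_vanishes_general n₁ n₂ L₁ L₂ G ξ hξ
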